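/- In the construction of Theorem 1 (adaptivity gap), the adaptive binary-search policy achieves zero expected 0/1 loss with expected cost log₂(N) for any prior with full support, whereas any policy with expected cost strictly less than N−1 that is non-adaptive cannot achieve zero expected loss; hence c(π_nonadapt)/c(π_adapt) = (N−1)/log₂(N) → ∞ as N → ∞. -/

import Mathlib

/-- Feature `F_{j,b}` in the construction of Theorem 1 with `N = 2^k` hypotheses
(0-indexed): indicator of membership in the first half of the `b`-th block of size
`2^(k-j+1)` at level `j`. -/
def feat (k j b h : ℕ) : Bool :=
  decide (b * 2 ^ (k - j + 1) ≤ h ∧ h < b * 2 ^ (k - j + 1) + 2 ^ (k - j))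

/-- An adaptive policy: a binary decision tree querying features. -/
inductive DTree where
  | leaf (guess : ℕ)
  | node (j b : ℕ) (t1 t0 : DTree)

def DTree.run (k : ℕ) : DTree → ℕ → ℕ
  | .leaf g, _ => g
  | .node j b t1 t0, h => if feat k j b h then t1.run k h else t0.run k h

def DTree.cost (k : ℕ) : DTree → ℕ → ℕ
  | .leaf _, _ => 0
  | .node j b t1 t0, h => 1 + (if feat k j b h then t1.cost k h else t0.cost k h)

def DTree.allowed (k : ℕ) : DTree → Prop
  | .leaf _ => True
  | .node j b t1 t0 => 1 ≤ j ∧ j ≤ k ∧ b < 2 ^ (j - 1) ∧ t1.allowed k ∧ t0.allowed k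

/-! Binary search queries the feature splitting the current block, so each of its `k` queries
halves the set of candidates. Conversely, for a feature `(j, b)` the last hypotheses of the two
halves of block `b` at level `j` lie, at every other level, in the same block and in the same half
of it: only `(j, b)` separates them, so a non-adaptive rule identifying every hypothesis queries
all `2 ^ k - 1` features. Finally `(2 ^ n - 1) / n ≥ n - 2`, as
`n (n - 1) = 2 C(n, 2) ≤ 2 ^ n`. -/

theorem feat_eq_true_iff {k j b h : ℕ} : feat k j b h = true ↔ h / 2 ^ (k - j) = 2 * b := by
  have hblock : b * 2 ^ (k - j + 1) = 2 * b * 2 ^ (k - j) := by ring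
  have hpos := Nat.two_pow_pos (k - j)
  rw [feat, decide_eq_true_iff, Nat.div_eq_iff hpos, hblock]
  omega

theorem div_two_pow_eq_ite_feat {k m b h : ℕ} (hm : m ≤ k) (hb : h / 2 ^ (m + 1) = b) :
    h / 2 ^ m = if feat k (k - m) b h then 2 * b else 2 * b + 1 := by
  rw [pow_succ, ← Nat.div_div_eq_div_mul] at hb
  have hlevel : k - (k - m) = m := by omega
  split_ifs with hf <;> rw [feat_eq_true_iff, hlevel] at hf <;> omega

namespace DTree

/-- Binary search on the block `b` of `2 ^ m` consecutive hypotheses. -/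
def binarySearch (k : ℕ) : ℕ → ℕ → DTree
  | 0, b => .leaf b
  | m + 1, b => .node (k - m) b (binarySearch k m (2 * b)) (binarySearch k m (2 * b + 1))

theorem run_binarySearch {k m : ℕ} (hm : m ≤ k) {b h : ℕ} (hb : h / 2 ^ m = b) :
    (binarySearch k m b).run k h = h := by
  induction m generalizing b with
  | zero => simpa [binarySearch, run] using hb.symm
  | succ m ih =>
    have hchild := div_two_pow_eq_ite_feat (Nat.le_of_succ_le hm) hb
    simp only [binarySearch, run]
    split_ifs at hchild ⊢ <;> exact ih (Nat.le_of_succ_le hm) hchild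

theorem cost_binarySearch {k m : ℕ} (hm : m ≤ k) {b h : ℕ} (hb : h / 2 ^ m = b) :
    (binarySearch k m b).cost k h = m := by
  induction m generalizing b with
  | zero => rfl
  | succ m ih =>
    have hchild := div_two_pow_eq_ite_feat (Nat.le_of_succ_le hm) hb
    simp only [binarySearch, cost]
    split_ifs at hchild ⊢ <;> rw [ih (Nat.le_of_succ_le hm) hchild, add_comm]

theorem allowed_binarySearch {k m b : ℕ} (hm : m ≤ k) (hb : b < 2 ^ (k - m)) :
    (binarySearch k m b).allowed k := by
  induction m generalizing b with
  | zero => trivial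
  | succ m ih =>
    have hlevel : k - (m + 1) + 1 = k - m := by omega
    have hb' : 2 * b + 1 < 2 ^ (k - m) := by
      rw [← hlevel, pow_succ]; omega
    have hm' := Nat.le_of_succ_le hm
    exact ⟨by omega, by omega, by rwa [Nat.sub_sub], ih hm' (by omega), ih hm' hb'⟩

end DTree

theorem mul_two_pow_add_sub_one_div {c : ℕ} (hc : 0 < c) (s t : ℕ) :
    (c * 2 ^ (s + t) - 1) / 2 ^ t = c * 2 ^ s - 1 := by
  have hpos : 0 < c * 2 ^ s := by positivity
  have hsplit : c * 2 ^ (s + t) = c * 2 ^ s * 2 ^ t := by ring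
  refine Nat.div_eq_of_lt_le ?_ ?_ <;> rw [hsplit]
  · rw [Nat.sub_mul, one_mul]
    have := Nat.one_le_two_pow (n := t)
    omega
  · rw [Nat.sub_add_cancel hpos]
    have := Nat.mul_pos hpos (Nat.two_pow_pos t)
    omega

theorem div_two_pow_eq_double_iff_of_ne {m b m' b' : ℕ} (hne : (m', b') ≠ (m, b)) :
    ((2 * b + 1) * 2 ^ m - 1) / 2 ^ m' = 2 * b' ↔
      ((2 * b + 2) * 2 ^ m - 1) / 2 ^ m' = 2 * b' := by
  have hlast : ∀ c, 0 < c → (c * 2 ^ m - 1) / 2 ^ m = c - 1 := fun c hc => by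
    simpa using mul_two_pow_add_sub_one_div hc 0 m
  rcases lt_trichotomy m' m with hlt | rfl | hgt
  · obtain ⟨u, rfl⟩ : ∃ u, m = u + 1 + m' := ⟨m - m' - 1, by omega⟩
    have hodd : ∀ c, 0 < c → (c * 2 ^ (u + 1 + m') - 1) / 2 ^ m' ≠ 2 * b' := by
      intro c hc
      rw [mul_two_pow_add_sub_one_div hc, pow_succ, ← mul_assoc]
      have := Nat.mul_pos hc (Nat.two_pow_pos u)
      omega
    exact iff_of_false (hodd _ (by omega)) (hodd _ (by omega))
  · have hb : b' ≠ b := fun h => hne (by rw [h])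
    rw [hlast _ (by omega), hlast _ (by omega)]
    omega
  · obtain ⟨s, rfl⟩ : ∃ s, m' = m + (s + 1) := ⟨m' - m - 1, by omega⟩
    simp only [pow_add, pow_succ', ← Nat.div_div_eq_div_mul, hlast _ (by omega : 0 < 2 * b + 1),
      hlast _ (by omega : 0 < 2 * b + 2)]
    have hhalf : (2 * b + 1 - 1) / 2 = (2 * b + 2 - 1) / 2 := by omega
    rw [hhalf]

theorem feat_block_ends_eq_of_ne {k j b j' b' : ℕ} (hj : j ≤ k) (hj' : j' ≤ k)
    (hne : (j', b') ≠ (j, b)) :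
    feat k j' b' ((2 * b + 1) * 2 ^ (k - j) - 1) =
      feat k j' b' ((2 * b + 2) * 2 ^ (k - j) - 1) := by
  have hne' : (k - j', b') ≠ (k - j, b) := fun h => hne (by
    simp only [Prod.mk.injEq] at h ⊢; omega)
  exact Bool.eq_iff_iff.mpr <| by
    simpa only [feat_eq_true_iff] using div_two_pow_eq_double_iff_of_ne hne'

theorem mem_of_identifies_of_agree_off {Q H : Type*} [DecidableEq Q] {F : Q → H → Bool}
    {S : Finset Q} {d : (Q → Bool) → H} {h₁ h₂ : H} {q : Q}
    (hd₁ : d (fun q' => if q' ∈ S then F q' h₁ else false) = h₁)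
    (hd₂ : d (fun q' => if q' ∈ S then F q' h₂ else false) = h₂)
    (hne : h₁ ≠ h₂) (hagree : ∀ q' ∈ S, q' ≠ q → F q' h₁ = F q' h₂) :
    q ∈ S := by
  by_contra hq
  refine hne (hd₁.symm.trans (Eq.trans ?_ hd₂))
  congr 1
  funext q'
  split_ifs with hq'
  · exact hagree q' hq' (ne_of_mem_of_not_mem hq' hq)
  · rfl

theorem forall_of_sum_mul_ite_eq_zero {ι : Type*} {s : Finset ι} {P : ι → ℝ}
    (hP : ∀ i ∈ s, 0 < P i) {p : ι → Prop} [DecidablePred p]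
    (hzero : ∑ i ∈ s, P i * (if p i then 0 else 1) = 0) : ∀ i ∈ s, p i := by
  have hterm := (Finset.sum_eq_zero_iff_of_nonneg fun i hi => by
    have := (hP i hi).le; split_ifs <;> simp [this]).mp hzero
  intro i hi
  by_contra hpi
  have hloss := hterm i hi
  rw [if_neg hpi, mul_one] at hloss
  exact (hP i hi).ne' hloss

/-- Heap indexing `n ↦ (log₂ n + 1, n - 2 ^ log₂ n)` maps `[1, 2 ^ k)` injectively to
features. -/
theorem two_pow_sub_one_le_card {k : ℕ} {S : Finset (ℕ × ℕ)}
    (hS : ∀ j b, 1 ≤ j → j ≤ k → b < 2 ^ (j - 1) → (j, b) ∈ S) :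
    2 ^ k - 1 ≤ S.card := by
  have hmaps : Set.MapsTo (fun n => (Nat.log 2 n + 1, n - 2 ^ Nat.log 2 n))
      (Finset.Ico 1 (2 ^ k) : Set ℕ) S := by
    intro n hn
    simp only [Finset.coe_Ico, Set.mem_Ico] at hn
    have hlog : Nat.log 2 n < k := Nat.log_lt_of_lt_pow (by omega) hn.2
    have hsucc := Nat.lt_pow_succ_log_self (by norm_num : 1 < 2) n
    rw [pow_succ] at hsucc
    exact hS _ _ (by omega) (by omega) (by simp only [Nat.add_sub_cancel]; omega)
  have hinj : Set.InjOn (fun n => (Nat.log 2 n + 1, n - 2 ^ Nat.log 2 n))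
      (Finset.Ico 1 (2 ^ k) : Set ℕ) := by
    intro n hn n' hn' h
    simp only [Finset.coe_Ico, Set.mem_Ico, Prod.mk.injEq, add_left_inj] at hn hn' h
    obtain ⟨hlog, hdiff⟩ := h
    have hle := Nat.pow_log_le_self 2 (x := n) (by omega)
    have hle' := Nat.pow_log_le_self 2 (x := n') (by omega)
    rw [hlog] at hdiff hle
    omega
  simpa using Finset.card_le_card_of_injOn _ hmaps hinj

theorem feat_mem_of_identifies {k : ℕ} {S : Finset (ℕ × ℕ)} (hS : ∀ q ∈ S, q.1 ≤ k)
    {d : ((ℕ × ℕ) → Bool) → ℕ}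
    (hd : ∀ h < 2 ^ k, d (fun q => if q ∈ S then feat k q.1 q.2 h else false) = h)
    {j b : ℕ} (hj : 1 ≤ j) (hjk : j ≤ k) (hb : b < 2 ^ (j - 1)) : (j, b) ∈ S := by
  have hlt : (2 * b + 1) * 2 ^ (k - j) < (2 * b + 2) * 2 ^ (k - j) :=
    Nat.mul_lt_mul_of_pos_right (by omega) (Nat.two_pow_pos _)
  have hpos : 0 < (2 * b + 1) * 2 ^ (k - j) := by positivity
  have hlast : (2 * b + 2) * 2 ^ (k - j) ≤ 2 ^ k := by
    have hj2 : 2 ^ j = 2 * 2 ^ (j - 1) := by rw [← pow_succ']; congr 1; omega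
    calc (2 * b + 2) * 2 ^ (k - j) ≤ 2 ^ j * 2 ^ (k - j) := Nat.mul_le_mul_right _ (by omega)
      _ = 2 ^ k := by rw [← pow_add]; congr 1; omega
  exact mem_of_identifies_of_agree_off (F := fun q h => feat k q.1 q.2 h)
    (hd ((2 * b + 1) * 2 ^ (k - j) - 1) (by omega))
    (hd ((2 * b + 2) * 2 ^ (k - j) - 1) (by omega)) (by omega)
    fun q hq hne => feat_block_ends_eq_of_ne hjk (hS q hq) hne

theorem succ_mul_le_two_pow_succ (n : ℕ) : (n + 1) * n ≤ 2 ^ (n + 1) := by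
  have hchoose := Nat.add_one_mul_choose_eq n 1
  rw [Nat.choose_one_right] at hchoose
  rw [hchoose, pow_succ]
  exact Nat.mul_le_mul_right 2 (Nat.choose_succ_le_two_pow n 2)

theorem sub_one_le_two_pow_succ_sub_one_div (n : ℕ) :
    (n : ℝ) - 1 ≤ (2 ^ (n + 1) - 1) / (n + 1 : ℕ) := by
  have hquad : ((n + 1) * n : ℕ) ≤ (2 ^ (n + 1) : ℝ) := by
    exact_mod_cast succ_mul_le_two_pow_succ n
  rw [le_div_iff₀ (by positivity)]
  push_cast at hquad ⊢
  nlinarith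

theorem adaptivity_gap_unbounded_general (k : ℕ) (P : ℕ → ℝ)
    (hP : ∀ h < 2 ^ k, 0 < P h)
    (hsum : ∑ h ∈ Finset.range (2 ^ k), P h = 1) :
    (∃ T : DTree, T.allowed k ∧ (∀ h < 2 ^ k, T.run k h = h) ∧
        ∑ h ∈ Finset.range (2 ^ k), P h * (T.cost k h : ℝ) = (k : ℝ)) ∧
    (∀ S : Finset (ℕ × ℕ), (∀ q ∈ S, 1 ≤ q.1 ∧ q.1 ≤ k ∧ q.2 < 2 ^ (q.1 - 1)) →
      ∀ d : ((ℕ × ℕ) → Bool) → ℕ,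
        (∑ h ∈ Finset.range (2 ^ k),
            P h * (if d (fun q => if q ∈ S then feat k q.1 q.2 h else false) = h
              then (0 : ℝ) else 1)) = 0 →
        2 ^ k - 1 ≤ S.card) ∧
    Filter.Tendsto (fun n : ℕ => ((2 ^ n - 1 : ℝ)) / (n : ℝ))
      Filter.atTop Filter.atTop := by
  have hroot : ∀ h < 2 ^ k, h / 2 ^ k = 0 := fun h hh => Nat.div_eq_of_lt hh
  refine ⟨⟨DTree.binarySearch k k 0, DTree.allowed_binarySearch le_rfl (by simp),
    fun h hh => DTree.run_binarySearch le_rfl (hroot h hh), ?_⟩, ?_, ?_⟩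
  · rw [Finset.sum_congr rfl fun h hh => by
      rw [DTree.cost_binarySearch le_rfl (hroot h (Finset.mem_range.mp hh))],
      ← Finset.sum_mul, hsum, one_mul]
  · intro S hS d hzero
    have hd := forall_of_sum_mul_ite_eq_zero (fun h hh => hP h (Finset.mem_range.mp hh)) hzero
    exact two_pow_sub_one_le_card fun j b hj hjk hb =>
      feat_mem_of_identifies (fun q hq => (hS q hq).2.1)
        (fun h hh => hd h (Finset.mem_range.mpr hh)) hj hjk hb
  · rw [← Filter.tendsto_add_atTop_iff_nat 1]
    refine Filter.tendsto_atTop_mono (fun n => ?_) (Filter.tendsto_atTop_add_const_right _ (-1)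
      tendsto_natCast_atTop_atTop)
    simpa [sub_eq_add_neg] using sub_one_le_two_pow_succ_sub_one_div n

/-- Adaptivity gap of the Theorem 1 construction.  For `N = 2^k` hypotheses with any
full-support prior `P`:
(1) the adaptive binary-search policy achieves zero expected 0/1 loss (it identifies
every hypothesis with certainty) with expected cost exactly `log₂ N = k`;
(2) any non-adaptive policy, given by a fixed feature set `S` and a decision rule `d`
on the observed feature vector, achieving zero expected 0/1 loss must query at least
`N - 1` features (hence every cheaper non-adaptive policy fails to achieve zero loss);
(3) the resulting cost ratio `(N - 1) / log₂ N` tends to infinity as `N → ∞`. -/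
theorem adaptivity_gap_unbounded (k : ℕ) (hk : 1 ≤ k) (P : ℕ → ℝ)
    (hP : ∀ h < 2 ^ k, 0 < P h)
    (hsum : ∑ h ∈ Finset.range (2 ^ k), P h = 1) :
    (∃ T : DTree, T.allowed k ∧ (∀ h < 2 ^ k, T.run k h = h) ∧
        ∑ h ∈ Finset.range (2 ^ k), P h * (T.cost k h : ℝ) = (k : ℝ)) ∧
    (∀ S : Finset (ℕ × ℕ), (∀ q ∈ S, 1 ≤ q.1 ∧ q.1 ≤ k ∧ q.2 < 2 ^ (q.1 - 1)) →
      ∀ d : ((ℕ × ℕ) → Bool) → ℕ,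
        (∑ h ∈ Finset.range (2 ^ k),
            P h * (if d (fun q => if q ∈ S then feat k q.1 q.2 h else false) = h
              then (0 : ℝ) else 1)) = 0 →
        2 ^ k - 1 ≤ S.card) ∧
    Filter.Tendsto (fun n : ℕ => ((2 ^ n - 1 : ℝ)) / (n : ℝ))
      Filter.atTop Filter.atTop :=
  adaptivity_gap_unbounded_general k P hP hsum
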